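/- arXiv:1006.1807 — 7 statements merged into one kernel-verified Lean document; each statement's English description precedes it below -/
import Mathlib

section
/- Let u_1, ..., u_{d+1} be the inward unit normals of the facets of a d-dimensional simplex in R^d. Then the (d+1)×(d+1) matrix A with entries a_ij = -⟨u_i, u_j⟩ is negative semidefinite of rank d, and its kernel is spanned by a vector with all coordinates strictly positive. -/
open RealInnerProductSpace

/-- A real matrix is negative semidefinite iff its negation is positive semidefinite. -/
def Matrix.NegSemidef {n : Type*} [Fintype n] (A : Matrix n n ℝ) : Prop :=
  (-A).PosSemidef

/-!
If `∑ yᵢ uᵢ = 0`, pairing with the edge `v j - v k` kills every term except those of the two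
facet normals not orthogonal to that edge, which gives `y j h j k = y k h k j` with
`h i j = ⟪u i, v i - v j⟫ > 0`. These detailed balance equations force a nonzero solution to have
coordinates of one strict sign and determine it up to scale. Since `d + 1` vectors in `ℝᵈ` are
dependent, the relation module of the normals is a line spanned by a positive vector; it is the
kernel of `A = -gram u`, and `-A` is a Gram matrix.
-/

namespace Matrix

variable {𝕜 E n : Type*} [RCLike 𝕜] [NormedAddCommGroup E] [InnerProductSpace 𝕜 E] [Fintype n]

theorem gram_mulVec_eq_zero_iff (v : n → E) (x : n → 𝕜) :
    gram 𝕜 v *ᵥ x = 0 ↔ ∑ i, x i • v i = 0 := by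
  rw [← (posSemidef_gram 𝕜 v).dotProduct_mulVec_zero_iff, star_dotProduct_gram_mulVec,
    inner_self_eq_zero]

theorem rank_add_one_eq_card_of_ker_eq_span_singleton {K m : Type*} [Field K]
    {A : Matrix m n K} {z : n → K} (hz : z ≠ 0) (hker : LinearMap.ker A.mulVecLin = K ∙ z) :
    A.rank + 1 = Fintype.card n := by
  have := LinearMap.finrank_range_add_finrank_ker A.mulVecLin
  rwa [hker, finrank_span_singleton hz, Module.finrank_fintype_fun_eq_card] at this

end Matrix

section DetailedBalance

variable {ι : Type*}

def IsDetailedBalanced (h : ι → ι → ℝ) (y : ι → ℝ) : Prop :=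
  ∀ j k, j ≠ k → y j * h j k = y k * h k j

variable {h : ι → ι → ℝ} {y z : ι → ℝ}

theorem IsDetailedBalanced.pos (hh : ∀ j k, j ≠ k → 0 < h j k) (hy : IsDetailedBalanced h y)
    {i : ι} (hi : 0 < y i) (j : ι) : 0 < y j := by
  obtain rfl | hji := eq_or_ne j i
  · exact hi
  have hprod : 0 < y j * h j i := hy j i hji ▸ mul_pos hi (hh i j hji.symm)
  exact pos_of_mul_pos_left hprod (hh j i hji).le

theorem IsDetailedBalanced.eq_smul (hh : ∀ j k, j ≠ k → h j k ≠ 0) (hy : IsDetailedBalanced h y)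
    (hz : IsDetailedBalanced h z) {i : ι} (hzi : z i ≠ 0) : y = (y i / z i) • z := by
  funext j
  obtain rfl | hji := eq_or_ne j i
  · simp [div_mul_cancel₀ _ hzi]
  rw [Pi.smul_apply, smul_eq_mul, div_mul_eq_mul_div, eq_div_iff hzi]
  refine mul_right_cancel₀ (hh j i hji) ?_
  linear_combination z i * hy j i hji - y i * hz j i hji

end DetailedBalance

section SimplexNormals

variable {ι E : Type*} [Fintype ι] [NormedAddCommGroup E] [InnerProductSpace ℝ E]
  {v u : ι → E}

theorem isDetailedBalanced_of_sum_smul_eq_zero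
    (horth : ∀ i j k, j ≠ i → k ≠ i → ⟪u i, v j - v k⟫ = 0)
    {y : ι → ℝ} (hy : ∑ i, y i • u i = 0) :
    IsDetailedBalanced (fun i j => ⟪u i, v i - v j⟫) y := by
  intro j k hjk
  show y j * ⟪u j, v j - v k⟫ = y k * ⟪u k, v k - v j⟫
  have hpair : ⟪∑ i, y i • u i, v j - v k⟫ = y j * ⟪u j, v j - v k⟫ + y k * ⟪u k, v j - v k⟫ := by
    simp_rw [sum_inner, real_inner_smul_left]
    refine Finset.sum_eq_add_of_mem j k (by simp) (by simp) hjk fun i _ hi => ?_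
    rw [horth i j k hi.1.symm hi.2.symm, mul_zero]
  have hflip : ⟪u k, v j - v k⟫ = -⟪u k, v k - v j⟫ := by rw [← inner_neg_right, neg_sub]
  rw [hy, inner_zero_left, hflip] at hpair
  linarith

theorem exists_pos_forall_sum_smul_eq_zero_iff [FiniteDimensional ℝ E]
    (hcard : Module.finrank ℝ E < Fintype.card ι)
    (horth : ∀ i j k, j ≠ i → k ≠ i → ⟪u i, v j - v k⟫ = 0)
    (hinward : ∀ i j, j ≠ i → 0 < ⟪u i, v i - v j⟫) :
    ∃ z : ι → ℝ, (∀ i, 0 < z i) ∧ ∀ y : ι → ℝ, ∑ i, y i • u i = 0 ↔ ∃ c : ℝ, y = c • z := by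
  have hdep : ¬ LinearIndependent ℝ u := fun hli => hcard.not_ge hli.fintype_card_le_finrank
  obtain ⟨g, hg, i₀, hgi₀⟩ := Fintype.not_linearIndependent_iff.mp hdep
  set z := (g i₀)⁻¹ • g
  have hz : ∑ i, z i • u i = 0 := by
    simp_rw [z, Pi.smul_apply, smul_assoc, ← Finset.smul_sum, hg, smul_zero]
  have hzi₀ : z i₀ = 1 := inv_mul_cancel₀ hgi₀
  have hbal := isDetailedBalanced_of_sum_smul_eq_zero horth hz
  have hpos : ∀ j k, j ≠ k → 0 < ⟪u j, v j - v k⟫ := fun j k hjk => hinward j k hjk.symm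
  refine ⟨z, hbal.pos hpos (hzi₀ ▸ one_pos), fun y => ⟨fun hy => ?_, ?_⟩⟩
  · exact ⟨_, (isDetailedBalanced_of_sum_smul_eq_zero horth hy).eq_smul
      (fun j k hjk => (hpos j k hjk).ne') hbal (hzi₀ ▸ one_ne_zero)⟩
  · rintro ⟨c, rfl⟩
    simp_rw [Pi.smul_apply, smul_assoc, ← Finset.smul_sum, hz, smul_zero]

end SimplexNormals

theorem stmt_5_general (d : ℕ)
    (v : Fin (d + 1) → EuclideanSpace ℝ (Fin d))
    (u : Fin (d + 1) → EuclideanSpace ℝ (Fin d))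
    -- u i is orthogonal to the facet F_i (the facet spanned by the vertices other than v i)
    (horth : ∀ i j k, j ≠ i → k ≠ i → ⟪u i, v j - v k⟫ = 0)
    -- u i points toward the interior of the simplex, i.e. toward the vertex v i
    (hinward : ∀ i j, j ≠ i → 0 < ⟪u i, v i - v j⟫)
    (A : Matrix (Fin (d + 1)) (Fin (d + 1)) ℝ)
    (hA : ∀ i j, A i j = - ⟪u i, u j⟫) :
    A.NegSemidef ∧ A.rank = d ∧
      ∃ z : Fin (d + 1) → ℝ, (∀ i, 0 < z i) ∧ A.mulVec z = 0 ∧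
        ∀ y : Fin (d + 1) → ℝ, A.mulVec y = 0 → ∃ c : ℝ, y = c • z := by
  have hA' : A = -Matrix.gram ℝ u := by ext i j; simp [hA]
  obtain ⟨z, hzpos, hker⟩ := exists_pos_forall_sum_smul_eq_zero_iff (v := v) (by simp) horth hinward
  have hAker : ∀ y, A.mulVec y = 0 ↔ ∃ c : ℝ, y = c • z := fun y => by
    rw [hA', Matrix.neg_mulVec, neg_eq_zero, Matrix.gram_mulVec_eq_zero_iff, hker]
  have hz : A.mulVec z = 0 := (hAker z).2 ⟨1, (one_smul ℝ z).symm⟩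
  have hrank : A.rank + 1 = d + 1 := by
    refine (Matrix.rank_add_one_eq_card_of_ker_eq_span_singleton
      (fun h0 => (hzpos 0).ne' (congrFun h0 0)) ?_).trans (Fintype.card_fin _)
    ext y
    simp [Submodule.mem_span_singleton, hAker, eq_comm]
  refine ⟨?_, by omega, z, hzpos, hz, fun y hy => (hAker y).1 hy⟩
  simpa [Matrix.NegSemidef, hA'] using Matrix.posSemidef_gram ℝ u

theorem stmt_5 (d : ℕ) (hd : 0 < d)
    (v : Fin (d + 1) → EuclideanSpace ℝ (Fin d)) (hv : AffineIndependent ℝ v)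
    (u : Fin (d + 1) → EuclideanSpace ℝ (Fin d))
    (hunit : ∀ i, ‖u i‖ = 1)
    -- u i is orthogonal to the facet F_i (the facet spanned by the vertices other than v i)
    (horth : ∀ i j k, j ≠ i → k ≠ i → ⟪u i, v j - v k⟫ = 0)
    -- u i points toward the interior of the simplex, i.e. toward the vertex v i
    (hinward : ∀ i j, j ≠ i → 0 < ⟪u i, v i - v j⟫)
    (A : Matrix (Fin (d + 1)) (Fin (d + 1)) ℝ)
    (hA : ∀ i j, A i j = - ⟪u i, u j⟫) :
    A.NegSemidef ∧ A.rank = d ∧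
      ∃ z : Fin (d + 1) → ℝ, (∀ i, 0 < z i) ∧ A.mulVec z = 0 ∧
        ∀ y : Fin (d + 1) → ℝ, A.mulVec y = 0 → ∃ c : ℝ, y = c • z :=
  stmt_5_general d v u horth hinward A hA
end

section
/- The sum of the angles of a spherical triangle on the unit sphere is strictly greater than π. Equivalently: the three dihedral angles of a tetrahedron adjacent to one of its vertices have sum greater than π. -/
open RealInnerProductSpace

/-- The spherical angle at the vertex `a` of a spherical triangle with other
vertices `b`, `c` on the unit sphere: the angle between the tangent directions
at `a` of the great-circle arcs from `a` to `b` and from `a` to `c`, i.e. the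
angle between the projections of `b` and `c` to the tangent plane at `a`. -/
noncomputable def sphericalAngle (a b c : EuclideanSpace ℝ (Fin 3)) : ℝ :=
  InnerProductGeometry.angle (b - ⟪a, b⟫ • a) (c - ⟪a, c⟫ • a)

/-!
The normals `u = b × c`, `v = c × a`, `w = a × b` to the sides are the vertices of the polar
triangle, and the angle at `a` is `π - ∠(v, w)` (similarly at `b` and `c`). Since
`det (u, v, w) = det (a, b, c) ^ 2 ≠ 0`, the vectors `u`, `-v`, `w` are linearly independent,
so the triangle inequality `∠(u, w) < ∠(u, -v) + ∠(-v, w)` is strict; it says that the sides of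
the polar triangle sum to less than `2π`, i.e. that the angles of `abc` sum to more than `π`.
-/

open InnerProductGeometry Matrix Real

namespace InnerProductGeometry

variable {V : Type*} [NormedAddCommGroup V] [InnerProductSpace ℝ V]

theorem angle_lt_angle_add_angle_of_linearIndependent {x y z : V}
    (h : LinearIndependent ℝ ![x, y, z]) : angle x z < angle x y + angle y z := by
  have hcoeff := Fintype.linearIndependent_iff.mp h
  refine (angle_le_angle_add_angle x y z).lt_of_ne fun heq => ?_
  rcases (angle_eq_angle_add_angle_iff (h.ne_zero 1)).mp heq with hπ | hspan
  · obtain ⟨-, r, -, hz⟩ := angle_eq_pi_iff.mp hπ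
    simpa using hcoeff ![r, 0, -1] (by simp [Fin.sum_univ_three, hz]) 2
  · obtain ⟨r, s, hy⟩ := Submodule.mem_span_pair.mp hspan
    simpa using hcoeff ![r, -1, s] (by simp [Fin.sum_univ_three, ← hy, NNReal.smul_def]) 1

theorem angle_add_angle_add_angle_lt_two_pi {u v w : V} (h : LinearIndependent ℝ ![u, v, w]) :
    angle u v + angle v w + angle w u < 2 * π := by
  have h' : LinearIndependent ℝ ![u, -v, w] := by
    convert h.units_smul ![1, -1, 1] using 1
    ext i
    fin_cases i <;> simp
  have := angle_lt_angle_add_angle_of_linearIndependent h'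
  rw [angle_neg_right, angle_neg_left, angle_comm u w] at this
  linarith

theorem angle_eq_angle_of_inner_eq {x y x' y' : V} (hx : ⟪x, x⟫ = ⟪x', x'⟫)
    (hy : ⟪y, y⟫ = ⟪y', y'⟫) (hxy : ⟪x, y⟫ = ⟪x', y'⟫) : angle x y = angle x' y' := by
  rw [angle, angle, norm_eq_sqrt_real_inner x, norm_eq_sqrt_real_inner y,
    norm_eq_sqrt_real_inner x', norm_eq_sqrt_real_inner y', hx, hy, hxy]

end InnerProductGeometry

theorem det_cross_cross_cross {R : Type*} [CommRing R] (a b c : Fin 3 → R) :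
    det ![b ⨯₃ c, c ⨯₃ a, a ⨯₃ b] = det ![a, b, c] ^ 2 := by
  -- `(c ⨯₃ a) ⨯₃ (a ⨯₃ b) = det ![a, b, c] • a`
  rw [← triple_product_eq_det, ← triple_product_eq_det, cross_cross_eq_smul_sub_smul',
    dot_cross_self, zero_smul, sub_zero, dotProduct_smul, smul_eq_mul, sq, dotProduct_comm _ a]
  congr 1
  rw [dotProduct_comm, triple_product_permutation, triple_product_permutation]

namespace EuclideanSpace

noncomputable def cross (x y : EuclideanSpace ℝ (Fin 3)) : EuclideanSpace ℝ (Fin 3) :=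
  WithLp.toLp 2 (x.ofLp ⨯₃ y.ofLp)

theorem real_inner_eq_dotProduct {ι : Type*} [Fintype ι] (x y : EuclideanSpace ℝ ι) :
    ⟪x, y⟫ = x.ofLp ⬝ᵥ y.ofLp := by
  rw [inner_eq_star_dotProduct, star_trivial, dotProduct_comm]

theorem cross_anticomm (x y : EuclideanSpace ℝ (Fin 3)) : -cross x y = cross y x := by
  rw [cross, cross, ← _root_.cross_anticomm x.ofLp y.ofLp, WithLp.toLp_neg]

theorem inner_cross_cross (x y z t : EuclideanSpace ℝ (Fin 3)) :
    ⟪cross x y, cross z t⟫ = ⟪x, z⟫ * ⟪y, t⟫ - ⟪x, t⟫ * ⟪y, z⟫ := by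
  simp only [real_inner_eq_dotProduct, cross]
  exact cross_dot_cross _ _ _ _

theorem inner_cross_cross_of_norm_eq_one {a : EuclideanSpace ℝ (Fin 3)} (ha : ‖a‖ = 1)
    (x y : EuclideanSpace ℝ (Fin 3)) :
    ⟪cross a x, cross a y⟫ = ⟪x - ⟪a, x⟫ • a, y - ⟪a, y⟫ • a⟫ := by
  rw [inner_cross_cross, real_inner_self_eq_norm_sq, ha]
  simp only [inner_sub_left, inner_sub_right, real_inner_smul_left, real_inner_smul_right,
    real_inner_self_eq_norm_sq, ha, real_inner_comm x a, real_inner_comm y a]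
  ring

theorem linearIndependent_iff_det_ne_zero {x y z : EuclideanSpace ℝ (Fin 3)} :
    LinearIndependent ℝ ![x, y, z] ↔ det (of ![x.ofLp, y.ofLp, z.ofLp]) ≠ 0 := by
  rw [← isUnit_iff_ne_zero, ← isUnit_iff_isUnit_det, ← linearIndependent_rows_iff_isUnit,
    ← (WithLp.linearEquiv 2 ℝ (Fin 3 → ℝ)).toLinearMap.linearIndependent_iff (by simp)]
  congr!
  ext i
  fin_cases i <;> rfl

theorem linearIndependent_cross {a b c : EuclideanSpace ℝ (Fin 3)}
    (h : LinearIndependent ℝ ![a, b, c]) :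
    LinearIndependent ℝ ![cross b c, cross c a, cross a b] := by
  rw [linearIndependent_iff_det_ne_zero] at h ⊢
  exact (det_cross_cross_cross a.ofLp b.ofLp c.ofLp).trans_ne (pow_ne_zero 2 h)

end EuclideanSpace

open EuclideanSpace

theorem sphericalAngle_eq_pi_sub_angle_cross {a : EuclideanSpace ℝ (Fin 3)} (ha : ‖a‖ = 1)
    (b c : EuclideanSpace ℝ (Fin 3)) :
    sphericalAngle a b c = π - angle (cross c a) (cross a b) := by
  rw [← EuclideanSpace.cross_anticomm a c, angle_neg_left, sub_sub_cancel, angle_comm,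
    sphericalAngle]
  exact angle_eq_angle_of_inner_eq (inner_cross_cross_of_norm_eq_one ha b b).symm
    (inner_cross_cross_of_norm_eq_one ha c c).symm (inner_cross_cross_of_norm_eq_one ha b c).symm

theorem stmt_7 (a b c : EuclideanSpace ℝ (Fin 3))
    (ha : ‖a‖ = 1) (hb : ‖b‖ = 1) (hc : ‖c‖ = 1)
    (hgen : LinearIndependent ℝ ![a, b, c]) :
    Real.pi < sphericalAngle a b c + sphericalAngle b c a + sphericalAngle c a b := by
  have hpolar := angle_add_angle_add_angle_lt_two_pi (linearIndependent_cross hgen)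
  rw [sphericalAngle_eq_pi_sub_angle_cross ha, sphericalAngle_eq_pi_sub_angle_cross hb,
    sphericalAngle_eq_pi_sub_angle_cross hc]
  linarith
end

section
/- Let α = 2πm/n with m, n coprime integers, n > 0. Then cos α is rational if and only if φ(n) ≤ 2, i.e., if and only if n ∈ {1, 2, 3, 4, 6}; in these cases cos α ∈ {0, ±1/2, ±1}. -/
/-!
Put `ζ = exp (2π i m / n)`, a primitive `n`-th root of unity, so that `2 cos α = ζ + ζ⁻¹`.
Since `ζ² - (ζ + ζ⁻¹) ζ + 1 = 0`, a rational `ζ + ζ⁻¹` bounds the degree `φ(n)` of the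
minimal polynomial of `ζ` (the `n`-th cyclotomic polynomial) by `2`. Conversely, if `φ(n) = 2`
the cyclotomic polynomial is `X² + cX + 1` with `c ∈ ℚ`, and dividing `Φₙ(ζ) = 0` by `ζ` gives
`ζ + ζ⁻¹ = -c`. Since `φ(p^k) ≤ φ(n)` for every prime power `p^k ∣ n`, `φ(n) ≤ 2` forces
`n ∣ 12`, which leaves `n ∈ {1, 2, 3, 4, 6}`. The values of `cos α` in the rational case are
those of Niven's theorem.
-/

open Polynomial Real
open scoped Nat

namespace Nat

theorem prime_pow_dvd_twelve_of_totient_le_two {p k : ℕ} (hp : p.Prime) (h : φ (p ^ k) ≤ 2) :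
    p ^ k ∣ 12 := by
  rcases Nat.eq_zero_or_pos k with rfl | hk
  · simp
  rw [totient_prime_pow hp hk] at h
  have hp3 : p ≤ 3 := by
    have := Nat.le_mul_of_pos_left (p - 1) (Nat.pow_pos (n := k - 1) hp.pos)
    omega
  have hp2 := hp.two_le
  interval_cases p
  · have : k ≤ 2 := by
      have := (Nat.pow_le_pow_iff_right (le_refl 2)).mp (by simpa using h : 2 ^ (k - 1) ≤ 2 ^ 1)
      omega
    exact (pow_dvd_pow 2 this).trans (by norm_num)
  · have : k = 1 := by
      have := (Nat.pow_le_pow_iff_right (by norm_num)).mp (by omega : 3 ^ (k - 1) ≤ 3 ^ 0)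
      omega
    subst this
    norm_num

theorem totient_le_two_iff {n : ℕ} (hn : 0 < n) : φ n ≤ 2 ↔ n ∈ ({1, 2, 3, 4, 6} : Set ℕ) := by
  constructor
  · intro h
    have h12 : n ∣ 12 := (Nat.dvd_iff_prime_pow_dvd_dvd 12 n).mpr fun p k hp hpk =>
      prime_pow_dvd_twelve_of_totient_le_two hp <|
        (Nat.le_of_dvd (totient_pos.mpr hn) (totient_dvd_of_dvd hpk)).trans h
    have := Nat.le_of_dvd (by norm_num) h12
    simp only [Set.mem_insert_iff, Set.mem_singleton_iff]
    interval_cases n <;> revert h h12 <;> decide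
  · rintro (rfl | rfl | rfl | rfl | rfl) <;> decide

end Nat

namespace IsPrimitiveRoot

variable {K : Type*} [Field K] [CharZero K] {ζ : K} {n : ℕ}

theorem totient_le_two_of_add_inv_eq_rat (hζ : IsPrimitiveRoot ζ n) (hn : 0 < n) {q : ℚ}
    (hq : ζ + ζ⁻¹ = q) : φ n ≤ 2 := by
  have hζ0 : ζ ≠ 0 := hζ.ne_zero hn.ne'
  have hroot : aeval ζ (X ^ 2 - C q * X + 1 : ℚ[X]) = 0 := by
    have : ζ ^ 2 - q * ζ + 1 = 0 := by rw [← hq]; field_simp; ring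
    simpa using this
  have hmonic : (X ^ 2 - C q * X + 1 : ℚ[X]).Monic := by monicity!
  have hdeg : (X ^ 2 - C q * X + 1 : ℚ[X]).natDegree = 2 := by compute_degree!
  rw [← natDegree_cyclotomic n ℚ, cyclotomic_eq_minpoly_rat hζ hn, ← hdeg]
  exact natDegree_le_natDegree (minpoly.min ℚ ζ hmonic hroot)

theorem exists_rat_add_inv_eq_of_totient_eq_two (hζ : IsPrimitiveRoot ζ n) (h : φ n = 2) :
    ∃ q : ℚ, ζ + ζ⁻¹ = q := by
  have hn : 1 < n := by
    rcases n with _ | _ | n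
    all_goals simp_all
  set P := cyclotomic n ℚ with hPdef
  have hP : aeval ζ P = 0 := by
    rw [hPdef, cyclotomic_eq_minpoly_rat hζ (by omega)]
    exact minpoly.aeval ℚ ζ
  have hPdeg : P.natDegree = 2 := by rw [natDegree_cyclotomic, h]
  have hP2 : P.coeff 2 = 1 := hPdeg ▸ (cyclotomic.monic n ℚ).leadingCoeff
  have hP0 : P.coeff 0 = 1 := cyclotomic_coeff_zero ℚ hn
  rw [aeval_eq_sum_range, hPdeg] at hP
  simp only [Finset.sum_range_succ, Finset.sum_range_zero, hP0, hP2, Algebra.smul_def,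
    eq_ratCast] at hP
  refine ⟨-P.coeff 1, ?_⟩
  have hζ0 : ζ ≠ 0 := hζ.ne_zero (by omega)
  push_cast
  field_simp
  linear_combination hP

theorem exists_rat_add_inv_eq_iff_totient_le_two (hζ : IsPrimitiveRoot ζ n) (hn : 0 < n) :
    (∃ q : ℚ, ζ + ζ⁻¹ = q) ↔ φ n ≤ 2 := by
  refine ⟨fun ⟨q, hq⟩ => hζ.totient_le_two_of_add_inv_eq_rat hn hq, fun h => ?_⟩
  rcases (by have := Nat.totient_pos.mpr hn; omega : φ n = 1 ∨ φ n = 2) with h1 | h2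
  · rcases Nat.totient_eq_one_iff.mp h1 with rfl | rfl
    · exact ⟨2, by rw [IsPrimitiveRoot.one_right_iff.mp hζ]; norm_num⟩
    · exact ⟨-2, by rw [hζ.eq_neg_one_of_two_right]; norm_num⟩
  · exact hζ.exists_rat_add_inv_eq_of_totient_eq_two h2

end IsPrimitiveRoot

theorem Complex.exp_mul_I_add_inv (x : ℝ) :
    Complex.exp (x * Complex.I) + (Complex.exp (x * Complex.I))⁻¹ = 2 * Real.cos x := by
  rw [← Complex.exp_neg, Complex.ofReal_cos, Complex.cos]
  ring_nf

theorem Real.exists_rat_eq_cos_iff (x : ℝ) :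
    (∃ q : ℚ, (q : ℝ) = cos x) ↔
      ∃ q : ℚ, Complex.exp (x * Complex.I) + (Complex.exp (x * Complex.I))⁻¹ = q := by
  simp only [Complex.exp_mul_I_add_inv]
  constructor
  · rintro ⟨q, hq⟩
    exact ⟨2 * q, by rw [← hq]; push_cast; ring⟩
  · rintro ⟨q, hq⟩
    refine ⟨q / 2, Complex.ofReal_injective ?_⟩
    push_cast at hq ⊢
    linear_combination -hq / 2

theorem stmt_8 (m : ℤ) (n : ℕ) (hn : 0 < n) (hcop : Int.gcd m (n : ℤ) = 1) :
    ((∃ q : ℚ, (q : ℝ) = Real.cos (2 * Real.pi * m / n)) ↔ Nat.totient n ≤ 2) ∧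
    (Nat.totient n ≤ 2 ↔ n ∈ ({1, 2, 3, 4, 6} : Set ℕ)) ∧
    (n ∈ ({1, 2, 3, 4, 6} : Set ℕ) →
      Real.cos (2 * Real.pi * m / n) ∈ ({0, 1/2, -(1/2), 1, -1} : Set ℝ)) := by
  have hζ : IsPrimitiveRoot (Complex.exp ((2 * π * m / n : ℝ) * Complex.I)) n := by
    convert Complex.isPrimitiveRoot_exp_of_isCoprime m n hn.ne'
      (Int.isCoprime_iff_gcd_eq_one.mpr hcop) using 2
    push_cast
    ring
  have hrat : (∃ q : ℚ, (q : ℝ) = cos (2 * π * m / n)) ↔ φ n ≤ 2 :=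
    (exists_rat_eq_cos_iff _).trans (hζ.exists_rat_add_inv_eq_iff_totient_le_two hn)
  refine ⟨hrat, Nat.totient_le_two_iff hn, fun h => ?_⟩
  obtain ⟨q, hq⟩ := hrat.mpr ((Nat.totient_le_two_iff hn).mpr h)
  have := niven ⟨2 * m / n, by push_cast; ring⟩ ⟨q, hq.symm⟩
  simp only [Set.mem_insert_iff, Set.mem_singleton_iff, neg_div] at this ⊢
  tauto
end

section
/- Let α = 2πm/n with m, n coprime integers, n > 0. Then cos α is an algebraic number of degree d over Q, where d = max(1, φ(n)/2); in particular for n ≥ 3, the degree of cos α over Q equals φ(n)/2. -/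
/-!
With ζ = exp(2πim/n), a primitive n-th root of unity, 2 cos(2πm/n) = ζ + ζ⁻¹. Hence
ℚ(cos α) ⊆ ℚ(ζ), and ζ is a root of X² - 2 cos α · X + 1 over ℚ(cos α). The field ℚ(cos α) is
real while ζ is not real once n ≥ 3, so [ℚ(ζ) : ℚ(cos α)] = 2 and the tower law together with
[ℚ(ζ) : ℚ] = φ(n) gives the degree φ(n)/2. For n ≤ 2 the tower law with φ(n) = 1 forces degree 1.
-/

open Polynomial IntermediateField

namespace IntermediateField

variable {K L : Type*} [Field K] [Field L] [Algebra K L]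

theorem adjoin_simple_adjoin_simple_of_mem {x y : L} (hy : y ∈ K⟮x⟯) :
    K⟮y⟯⟮x⟯.restrictScalars K = K⟮x⟯ := by
  rw [adjoin_simple_adjoin_simple]
  refine le_antisymm (adjoin_le_iff.mpr ?_) (adjoin.mono _ _ _ (Set.subset_insert y {x}))
  rintro z (rfl | rfl)
  exacts [hy, mem_adjoin_simple_self K z]

theorem natDegree_minpoly_mul_natDegree_minpoly_adjoin {x y : L} (hx : IsIntegral K x)
    (hy : y ∈ K⟮x⟯) :
    (minpoly K y).natDegree * (minpoly K⟮y⟯ x).natDegree = (minpoly K x).natDegree := by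
  have := adjoin.finiteDimensional hx
  have hyi : IsIntegral K y := isIntegral_iff.mp (IsIntegral.of_finite K (⟨y, hy⟩ : K⟮x⟯))
  rw [← adjoin.finrank hyi, ← adjoin.finrank hx.tower_top, ← adjoin.finrank hx,
    Module.finrank_mul_finrank, ← adjoin_simple_adjoin_simple_of_mem hy]
  rfl

theorem natDegree_minpoly_adjoin_le_two {x c : L} (hx : x ≠ 0) (hc : x + x⁻¹ = 2 * c) :
    (minpoly K⟮c⟯ x).natDegree ≤ 2 := by
  set q : K⟮c⟯[X] := X ^ 2 - C (2 * AdjoinSimple.gen K c) * X + 1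
  have hq : q.natDegree = 2 := by unfold q; compute_degree!
  have hroot : aeval x q = 0 := by
    simp only [q, map_add, map_sub, map_mul, map_pow, aeval_X, aeval_C, map_one, map_ofNat,
      AdjoinSimple.algebraMap_gen, ← hc]
    field_simp
    ring
  exact hq ▸ natDegree_le_of_dvd (minpoly.dvd _ _ hroot) fun h ↦ by simp [h] at hq

end IntermediateField

namespace Complex

theorem im_eq_zero_of_mem_adjoin_ofReal {c : ℝ} {z : ℂ} (hz : z ∈ ℚ⟮(c : ℂ)⟯) :
    z.im = 0 := by
  have hle : ℚ⟮(c : ℂ)⟯ ≤ (ofRealAm.restrictScalars ℚ).fieldRange :=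
    adjoin_simple_le_iff.mpr ⟨c, rfl⟩
  obtain ⟨r, rfl⟩ := hle hz
  exact ofReal_im r

theorem exp_mul_I_add_inv_s9 (θ : ℝ) :
    exp (θ * I) + (exp (θ * I))⁻¹ = 2 * Real.cos θ := by
  rw [← exp_neg, ofReal_cos, ← neg_mul, ← two_cos]

end Complex

namespace IsPrimitiveRoot

variable {ζ : ℂ} {n : ℕ} {c : ℝ}

theorem im_ne_zero (hζ : IsPrimitiveRoot ζ n) (hn : 3 ≤ n) : ζ.im ≠ 0 := by
  intro him
  have hsq : ζ ^ 2 = 1 := by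
    rw [sq]
    nth_rw 2 [← Complex.conj_eq_iff_im.mpr him]
    rw [Complex.mul_conj', hζ.norm'_eq_one (by omega)]
    simp
  have := Nat.le_of_dvd two_pos (hζ.dvd_of_pow_eq_one 2 hsq)
  omega

theorem natDegree_minpoly_mul_natDegree_minpoly_adjoin (hζ : IsPrimitiveRoot ζ n) (hn : n ≠ 0)
    (hc : ζ + ζ⁻¹ = 2 * c) :
    (minpoly ℚ c).natDegree * (minpoly ℚ⟮(c : ℂ)⟯ ζ).natDegree = n.totient := by
  have hcζ : (c : ℂ) ∈ ℚ⟮ζ⟯ := by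
    rw [show (c : ℂ) = (ζ + ζ⁻¹) / 2 by rw [hc]; ring]
    have hζmem := mem_adjoin_simple_self ℚ ζ
    exact div_mem (add_mem hζmem (inv_mem hζmem)) (ofNat_mem _ 2)
  rw [← minpoly.algebraMap_eq Complex.ofReal_injective, Complex.coe_algebraMap,
    IntermediateField.natDegree_minpoly_mul_natDegree_minpoly_adjoin
      (hζ.isIntegral (Nat.pos_of_ne_zero hn)).tower_top hcζ,
    ← cyclotomic_eq_minpoly_rat hζ (Nat.pos_of_ne_zero hn), natDegree_cyclotomic]

theorem natDegree_minpoly_adjoin_eq_two (hζ : IsPrimitiveRoot ζ n) (hn : 3 ≤ n)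
    (hc : ζ + ζ⁻¹ = 2 * c) : (minpoly ℚ⟮(c : ℂ)⟯ ζ).natDegree = 2 := by
  refine le_antisymm (natDegree_minpoly_adjoin_le_two (hζ.ne_zero (by omega)) hc) ?_
  have hint : IsIntegral ℚ⟮(c : ℂ)⟯ ζ := (hζ.isIntegral (by omega)).tower_top
  refine (minpoly.two_le_natDegree_iff hint).mpr ?_
  rintro ⟨z, rfl⟩
  exact hζ.im_ne_zero hn (Complex.im_eq_zero_of_mem_adjoin_ofReal z.2)

end IsPrimitiveRoot

theorem exists_isPrimitiveRoot_add_inv_eq_two_mul_cos (m : ℤ) (n : ℕ) (hn : n ≠ 0)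
    (hcop : IsCoprime m n) :
    ∃ ζ : ℂ, IsPrimitiveRoot ζ n ∧ ζ + ζ⁻¹ = 2 * Real.cos (2 * Real.pi * m / n) := by
  refine ⟨_, Complex.isPrimitiveRoot_exp_of_isCoprime m n hn hcop, ?_⟩
  rw [← Complex.exp_mul_I_add_inv_s9]
  push_cast
  ring_nf

theorem stmt_9 (m : ℤ) (n : ℕ) (hn : 0 < n) (hcop : Int.gcd m (n : ℤ) = 1) :
    (minpoly ℚ (Real.cos (2 * Real.pi * m / n))).natDegree = max 1 (Nat.totient n / 2) ∧
    (3 ≤ n → (minpoly ℚ (Real.cos (2 * Real.pi * m / n))).natDegree = Nat.totient n / 2) := by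
  obtain ⟨ζ, hζ, hc⟩ := exists_isPrimitiveRoot_add_inv_eq_two_mul_cos m n hn.ne'
    (Int.isCoprime_iff_gcd_eq_one.mpr hcop)
  have hmul := hζ.natDegree_minpoly_mul_natDegree_minpoly_adjoin hn.ne' hc
  rcases le_or_gt 3 n with h3 | h2
  · rw [hζ.natDegree_minpoly_adjoin_eq_two h3 hc] at hmul
    have hpos : 0 < n.totient := Nat.totient_pos.mpr hn
    omega
  · have htot : n.totient = 1 := Nat.totient_eq_one_iff.mpr (by omega)
    rw [htot] at hmul
    rw [Nat.eq_one_of_mul_eq_one_right hmul, htot]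
    exact ⟨rfl, by omega⟩
end

section
/- If α is a rational multiple of π and cos α is a quadratic irrational (algebraic of degree exactly 2 over Q), then cos α ∈ {±(√5-1)/4, ±√2/2, ±(√5+1)/4, ±√3/2}. -/
/-!
Write `c = cos α` and `z = exp (α i)`, so that `z² + 1 = 2cz`, i.e. `c = (z + z⁻¹) / 2`. Since
`α ∈ ℚπ`, `z` is a primitive `n`-th root of unity for some `n ≥ 1`, of degree `φ n` over `ℚ`; as `z`
is a root of `X² - 2cX + 1` over `ℚ(c)`, the tower law gives `φ n ≤ 2 · 2`, so
`n ∈ {1, 2, 3, 4, 5, 6, 8, 10, 12}`. For `n = 3, 5` the relation `1 + z + ⋯ + z^(n-1) = 0`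
determines `c`, and `z ↦ z²`, `c ↦ 2c² - 1` passes from an even order `n` to `n / 2`. Rational
values of `c` contradict `deg c = 2`; the remaining quadratic relations have the eight listed roots.
-/

open Polynomial IntermediateField Nat Real

theorem Nat.prime_pow_dvd_120_of_totient_le_four {p k : ℕ} (hp : p.Prime) (h : φ (p ^ k) ≤ 4) :
    p ^ k ∣ 120 := by
  rcases k.eq_zero_or_pos with rfl | hk
  · simp
  rw [totient_prime_pow hp hk] at h
  have hp5 : p ≤ 5 := by
    have := Nat.le_mul_of_pos_left (p - 1) (pow_pos hp.pos (k - 1))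
    omega
  have hk3 : k ≤ 3 := by
    have : 2 ^ (k - 1) < 2 ^ 3 := calc
      2 ^ (k - 1) ≤ p ^ (k - 1) := Nat.pow_le_pow_left hp.two_le _
      _ ≤ p ^ (k - 1) * (p - 1) := Nat.le_mul_of_pos_right _ (by have := hp.two_le; omega)
      _ < 2 ^ 3 := by omega
    have := (Nat.pow_lt_pow_iff_right (by norm_num)).1 this
    omega
  interval_cases p <;> interval_cases k <;> revert hp h <;> decide

theorem Nat.mem_of_totient_le_four {n : ℕ} (hn : n ≠ 0) (h : φ n ≤ 4) :
    n ∈ ({1, 2, 3, 4, 5, 6, 8, 10, 12} : Finset ℕ) := by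
  have hdvd : n ∣ 120 := (Nat.dvd_iff_prime_pow_dvd_dvd 120 n).2 fun p k hp hpk ↦
    prime_pow_dvd_120_of_totient_le_four hp <|
      (Nat.le_of_dvd (totient_pos.2 (Nat.pos_of_ne_zero hn)) (totient_dvd_of_dvd hpk)).trans h
  have key : ∀ m ∈ Nat.divisors 120, φ m ≤ 4 →
      m ∈ ({1, 2, 3, 4, 5, 6, 8, 10, 12} : Finset ℕ) := by
    decide
  exact key n (Nat.mem_divisors.2 ⟨hdvd, by norm_num⟩) h

theorem natDegree_minpoly_le_mul {K L : Type*} [Field K] [Field L] [Algebra K L] {z c : L}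
    (hc : IsIntegral K c) {p : K⟮c⟯[X]} (hp : p.Monic) (hpz : aeval z p = 0) :
    (minpoly K z).natDegree ≤ p.natDegree * (minpoly K c).natDegree := by
  have hzF : IsIntegral K⟮c⟯ z := ⟨p, hp, hpz⟩
  have : FiniteDimensional K K⟮c⟯ := adjoin.finiteDimensional hc
  have : FiniteDimensional K⟮c⟯ K⟮c⟯⟮z⟯ := adjoin.finiteDimensional hzF
  have : FiniteDimensional K K⟮c⟯⟮z⟯ := Module.Finite.trans K⟮c⟯ K⟮c⟯⟮z⟯
  have : Module.Free K⟮c⟯ K⟮c⟯⟮z⟯ := Module.Free.of_divisionRing _ _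
  have : IsScalarTower K K⟮c⟯⟮z⟯ L := IsScalarTower.of_algebraMap_eq fun _ ↦ rfl
  calc (minpoly K z).natDegree = (minpoly K (AdjoinSimple.gen K⟮c⟯ z)).natDegree := by
        rw [← minpoly.algebraMap_eq (algebraMap K⟮c⟯⟮z⟯ L).injective]; rfl
    _ ≤ Module.finrank K K⟮c⟯⟮z⟯ := minpoly.natDegree_le _
    _ = Module.finrank K⟮c⟯ K⟮c⟯⟮z⟯ * Module.finrank K K⟮c⟯ := by
        rw [← Module.finrank_mul_finrank K K⟮c⟯ K⟮c⟯⟮z⟯, mul_comm]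
    _ ≤ _ := by
        rw [adjoin.finrank hc, adjoin.finrank hzF]
        gcongr
        exact natDegree_le_natDegree (minpoly.min _ z hp hpz)

theorem natDegree_minpoly_le_two_mul {K L : Type*} [Field K] [Field L] [Algebra K L] {z c : L}
    (hc : IsIntegral K c) (hzc : z ^ 2 + 1 = 2 * c * z) :
    (minpoly K z).natDegree ≤ 2 * (minpoly K c).natDegree := by
  have hp : (X ^ 2 - 2 * C (AdjoinSimple.gen K c) * X + 1).natDegree = 2 := by compute_degree!
  have hpz : aeval z (X ^ 2 - 2 * C (AdjoinSimple.gen K c) * X + 1) = 0 := by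
    simp only [map_add, map_sub, map_mul, map_pow, map_ofNat, map_one, aeval_X, aeval_C,
      AdjoinSimple.algebraMap_gen]
    linear_combination hzc
  simpa [hp] using natDegree_minpoly_le_mul hc (by monicity!) hpz

section RootsOfUnity

variable {K : Type*} [Field K] {z c : K}

theorem sq_sq_add_one_eq_of_sq_add_one_eq (hzc : z ^ 2 + 1 = 2 * c * z) :
    (z ^ 2) ^ 2 + 1 = 2 * (2 * c ^ 2 - 1) * z ^ 2 := by
  linear_combination (z ^ 2 + 1 + 2 * c * z) * hzc

theorem IsPrimitiveRoot.two_mul_eq_neg_one_of_three (hz : IsPrimitiveRoot z 3)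
    (hzc : z ^ 2 + 1 = 2 * c * z) : 2 * c = -1 := by
  have h := hz.geom_sum_eq_zero (by norm_num)
  simp only [Finset.sum_range_succ, Finset.sum_range_zero] at h
  have : z * (2 * c + 1) = 0 := by linear_combination h - hzc
  linear_combination (mul_eq_zero.1 this).resolve_left (hz.ne_zero (by norm_num))

theorem IsPrimitiveRoot.two_mul_eq_zero_of_four (hz : IsPrimitiveRoot z 4)
    (hzc : z ^ 2 + 1 = 2 * c * z) : 2 * c = 0 := by
  have hz2 : z ^ 2 = -1 := (hz.pow (by norm_num) (rfl : 4 = 2 * 2)).eq_neg_one_of_two_right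
  have : z * (2 * c) = 0 := by linear_combination -hzc + hz2
  exact (mul_eq_zero.1 this).resolve_left (hz.ne_zero (by norm_num))

theorem IsPrimitiveRoot.quadratic_of_five (hz : IsPrimitiveRoot z 5)
    (hzc : z ^ 2 + 1 = 2 * c * z) : 4 * c ^ 2 + 2 * c - 1 = 0 := by
  have h := hz.geom_sum_eq_zero (by norm_num)
  simp only [Finset.sum_range_succ, Finset.sum_range_zero] at h
  have : z ^ 2 * (4 * c ^ 2 + 2 * c - 1) = 0 := by
    linear_combination h - (z ^ 2 + 1 + 2 * c * z + z) * hzc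
  exact (mul_eq_zero.1 this).resolve_left (pow_ne_zero 2 (hz.ne_zero (by norm_num)))

theorem IsPrimitiveRoot.four_mul_sq_eq_one_of_six (hz : IsPrimitiveRoot z 6)
    (hzc : z ^ 2 + 1 = 2 * c * z) : 4 * c ^ 2 = 1 := by
  linear_combination (hz.pow (by norm_num) rfl).two_mul_eq_neg_one_of_three
    (sq_sq_add_one_eq_of_sq_add_one_eq hzc)

theorem exists_rat_eq_of_four_mul_sq_eq_one [CharZero K] (h : 4 * c ^ 2 = 1) :
    ∃ q : ℚ, c = q := by
  have : (2 * c - 1) * (2 * c + 1) = 0 := by linear_combination h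
  rcases mul_eq_zero.1 this with h | h
  · exact ⟨1 / 2, by push_cast; linear_combination h / 2⟩
  · exact ⟨-1 / 2, by push_cast; linear_combination h / 2⟩

theorem IsPrimitiveRoot.exists_rat_or_quadratic [CharZero K] {n : ℕ} (hz : IsPrimitiveRoot z n)
    (hn : n ∈ ({1, 2, 3, 4, 5, 6, 8, 10, 12} : Finset ℕ)) (hzc : z ^ 2 + 1 = 2 * c * z) :
    (∃ q : ℚ, c = q) ∨ (4 * c ^ 2 + 2 * c - 1) * (4 * c ^ 2 - 2 * c - 1) = 0 ∨
      2 * c ^ 2 = 1 ∨ 4 * c ^ 2 = 3 := by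
  have hzc2 := sq_sq_add_one_eq_of_sq_add_one_eq hzc
  simp only [Finset.mem_insert, Finset.mem_singleton] at hn
  rcases hn with rfl | rfl | rfl | rfl | rfl | rfl | rfl | rfl | rfl
  · obtain rfl := IsPrimitiveRoot.one_right_iff.1 hz
    exact .inl ⟨1, by push_cast; linear_combination -hzc / 2⟩
  · obtain rfl := hz.eq_neg_one_of_two_right
    exact .inl ⟨-1, by push_cast; linear_combination hzc / 2⟩
  · exact .inl ⟨-1 / 2, by push_cast; linear_combination hz.two_mul_eq_neg_one_of_three hzc / 2⟩
  · exact .inl ⟨0, by push_cast; linear_combination hz.two_mul_eq_zero_of_four hzc / 2⟩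
  · exact .inr <| .inl <| by
      linear_combination (4 * c ^ 2 - 2 * c - 1) * hz.quadratic_of_five hzc
  · exact .inl <| exists_rat_eq_of_four_mul_sq_eq_one <| hz.four_mul_sq_eq_one_of_six hzc
  · exact .inr <| .inr <| .inl <| by
      linear_combination (hz.pow (by norm_num) rfl).two_mul_eq_zero_of_four hzc2 / 2
  · exact .inr <| .inl <| by
      linear_combination (hz.pow (by norm_num) rfl).quadratic_of_five hzc2
  · have h := (hz.pow (by norm_num) rfl).four_mul_sq_eq_one_of_six hzc2
    have : (4 * c ^ 2 - 1) * (4 * c ^ 2 - 3) = 0 := by linear_combination h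
    rcases mul_eq_zero.1 this with h | h
    · exact .inl <| exists_rat_eq_of_four_mul_sq_eq_one (by linear_combination h)
    · exact .inr <| .inr <| .inr <| by linear_combination h

end RootsOfUnity

theorem Complex.exp_mul_I_sq_add_one (x : ℂ) :
    exp (x * I) ^ 2 + 1 = 2 * cos x * exp (x * I) := by
  rw [two_cos, add_mul, ← exp_add, ← exp_add, sq, ← exp_add, neg_mul, neg_add_cancel, exp_zero]

theorem Real.cos_rat_mul_pi_quadratic (r : ℚ)
    (hdeg : (minpoly ℚ (cos (r * π))).natDegree = 2) :
    (4 * cos (r * π) ^ 2 + 2 * cos (r * π) - 1) *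
        (4 * cos (r * π) ^ 2 - 2 * cos (r * π) - 1) = 0 ∨
      2 * cos (r * π) ^ 2 = 1 ∨ 4 * cos (r * π) ^ 2 = 3 := by
  set c := cos (r * π)
  have hc : IsIntegral ℚ c := by
    by_contra h
    simp [minpoly.eq_zero h] at hdeg
  have hdegC : (minpoly ℚ (c : ℂ)).natDegree = 2 := by
    rwa [← Complex.coe_algebraMap, minpoly.algebraMap_eq (algebraMap ℝ ℂ).injective]
  set z := Complex.exp (r * π * Complex.I)
  have hzc : z ^ 2 + 1 = 2 * (c : ℂ) * z := by
    rw [Complex.exp_mul_I_sq_add_one]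
    simp only [c, z, Complex.ofReal_cos, Complex.ofReal_mul, Complex.ofReal_ratCast]
  have hn : orderOf z ≠ 0 := (IsOfFinOrder.orderOf_pos (isOfFinOrder_iff_pow_eq_one.2
    ⟨2 * r.den, by positivity, Complex.exp_rat_mul_pi_mul_I_pow_two_mul_den r⟩)).ne'
  have hz := IsPrimitiveRoot.orderOf z
  have htot : φ (orderOf z) ≤ 4 := by
    rw [← natDegree_cyclotomic (orderOf z) ℚ, cyclotomic_eq_minpoly_rat hz (Nat.pos_of_ne_zero hn)]
    simpa [hdegC] using natDegree_minpoly_le_two_mul (hc.algebraMap (B := ℂ)) hzc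
  rcases hz.exists_rat_or_quadratic (Nat.mem_of_totient_le_four hn htot) hzc with ⟨q, hq⟩ | h
  · have hcq : c = q := by exact_mod_cast hq
    exact absurd ⟨q, hcq.symm⟩ ((minpoly.two_le_natDegree_iff hc).1 hdeg.ge)
  · exact_mod_cast h

theorem Real.eq_sqrt_or_eq_neg_sqrt_of_sq_eq {x s : ℝ} (hs : 0 ≤ s) (h : x ^ 2 = s) :
    x = √s ∨ x = -√s :=
  sq_eq_sq_iff_eq_or_eq_neg.1 (h.trans (Real.sq_sqrt hs).symm)

theorem stmt_11 (α : ℝ) (r : ℚ) (hα : α = (r : ℝ) * Real.pi)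
    (hdeg : (minpoly ℚ (Real.cos α)).natDegree = 2) :
    Real.cos α ∈ ({(Real.sqrt 5 - 1) / 4, -((Real.sqrt 5 - 1) / 4),
      Real.sqrt 2 / 2, -(Real.sqrt 2 / 2),
      (Real.sqrt 5 + 1) / 4, -((Real.sqrt 5 + 1) / 4),
      Real.sqrt 3 / 2, -(Real.sqrt 3 / 2)} : Set ℝ) := by
  subst hα
  simp only [Set.mem_insert_iff, Set.mem_singleton_iff]
  rcases Real.cos_rat_mul_pi_quadratic r hdeg with h | h | h
  · rcases mul_eq_zero.1 h with h | h
    · rcases Real.eq_sqrt_or_eq_neg_sqrt_of_sq_eq (by norm_num)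
        (by linear_combination 4 * h : (4 * cos (r * π) + 1) ^ 2 = 5) with h | h <;> grind
    · rcases Real.eq_sqrt_or_eq_neg_sqrt_of_sq_eq (by norm_num)
        (by linear_combination 4 * h : (4 * cos (r * π) - 1) ^ 2 = 5) with h | h <;> grind
  · rcases Real.eq_sqrt_or_eq_neg_sqrt_of_sq_eq (by norm_num)
      (by linear_combination 2 * h : (2 * cos (r * π)) ^ 2 = 2) with h | h <;> grind
  · rcases Real.eq_sqrt_or_eq_neg_sqrt_of_sq_eq (by norm_num)
      (by linear_combination h : (2 * cos (r * π)) ^ 2 = 3) with h | h <;> grind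
end

section
/- The golden-ratio-related number φ - 1 = (√5 - 1)/2, a root of x^4 - 3x^2 + 1 = 0 lying in (-1,1), is not equal to cos(rπ) for any rational number r. -/
/-!
Write `x = 2 cos(rπ)`. The doubling formula `2 cos 2θ = (2 cos θ)² - 2` makes `2 cos(2ᵏ rπ)` the
`k`-th iterate of `y ↦ y² - 2` at `x`, and for rational `r` these values lie in a finite set. If
`x = a + b√5` with `a, b ∈ ℤ`, the iteration is a polynomial map over `ℤ[√5]`, so it commutes with
the conjugation `√5 ↦ -√5`; the conjugate `a - b√5` of `√5 - 1` (resp. `1 - √5`) has absolute value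
greater than `2`, where `|y| < |y² - 2|`, so the conjugate orbit, and hence the orbit of `x`, is
injective: a contradiction.
-/

open Real Function

theorem Function.Periodic.finite_range_nat {α : Type*} {f : ℕ → α} {a : ℕ} (hf : Periodic f a)
    (ha : 0 < a) : (Set.range f).Finite :=
  ((Set.finite_Iio a).image f).subset <| Set.range_subset_iff.2 fun n =>
    ⟨n % a, Nat.mod_lt n ha, hf.map_mod_nat n⟩

theorem periodic_cos_nat_mul_rat_mul_pi (r : ℚ) :
    Periodic (fun n : ℕ => cos (n * (r * π))) (2 * r.den) := fun n => by
  have hden : (r.den : ℝ) * r = r.num := by exact_mod_cast Rat.den_mul_eq_num r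
  have : ((n + 2 * r.den : ℕ) : ℝ) * (r * π) = n * (r * π) + r.num * (2 * π) := by
    push_cast; linear_combination (2 * π) * hden
  simp only [this, cos_add_int_mul_two_pi]

theorem finite_range_cos_nat_mul_rat_mul_pi (r : ℚ) :
    (Set.range fun n : ℕ => cos (n * (r * π))).Finite :=
  (periodic_cos_nat_mul_rat_mul_pi r).finite_range_nat (by positivity)

theorem two_mul_cos_two_mul (x : ℝ) : 2 * cos (2 * x) = (2 * cos x) ^ 2 - 2 := by
  rw [cos_two_mul]; ring

theorem two_mul_cos_two_pow_mul (x : ℝ) (k : ℕ) :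
    2 * cos (2 ^ k * x) = (fun y : ℝ => y ^ 2 - 2)^[k] (2 * cos x) := by
  induction k with
  | zero => simp
  | succ k ih => rw [iterate_succ_apply', ← ih, pow_succ, mul_comm _ (2 : ℝ), mul_assoc,
      two_mul_cos_two_mul]

theorem abs_lt_abs_sq_sub_two {y : ℝ} (hy : 2 < |y|) : |y| < |y ^ 2 - 2| := by
  rw [← sq_abs y]
  have : |y| < |y| ^ 2 - 2 := by nlinarith
  exact this.trans_le (le_abs_self _)

theorem injective_iterate_sq_sub_two {y : ℝ} (hy : 2 < |y|) :
    Injective fun k => (fun y : ℝ => y ^ 2 - 2)^[k] y := by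
  have hgt : ∀ k, 2 < |(fun y : ℝ => y ^ 2 - 2)^[k] y| := by
    intro k
    induction k with
    | zero => exact hy
    | succ k ih => rw [iterate_succ_apply']; exact ih.trans (abs_lt_abs_sq_sub_two ih)
  have hmono : StrictMono fun k => |(fun y : ℝ => y ^ 2 - 2)^[k] y| :=
    strictMono_nat_of_lt_succ fun k => by
      simp only [iterate_succ_apply']; exact abs_lt_abs_sq_sub_two (hgt k)
  exact fun k l h => hmono.injective (congrArg abs h)

theorem two_mul_cos_rat_mul_pi_ne_of_two_lt_abs {R : Type*} [CommRing R] (f g : R →+* ℝ)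
    (hf : Injective f) {z : R} (hz : 2 < |g z|) (r : ℚ) : 2 * cos (r * π) ≠ f z := by
  intro hcos
  set S : R → R := fun y => y ^ 2 - 2
  have hsemiconj : ∀ h : R →+* ℝ, Semiconj h S fun y => y ^ 2 - 2 := fun h y => by
    simp only [S, map_sub, map_pow, map_ofNat]
  have hdouble : ∀ k : ℕ, 2 * cos (2 ^ k * (r * π)) = f (S^[k] z) := fun k => by
    rw [(hsemiconj f).iterate_right k z, ← hcos, two_mul_cos_two_pow_mul]
  have hinj : Injective fun k : ℕ => cos (2 ^ k * (r * π)) := by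
    intro k l hkl
    have hS : S^[k] z = S^[l] z := hf <| by
      simp only at hkl; rw [← hdouble, ← hdouble, hkl]
    apply injective_iterate_sq_sub_two hz
    simp only [← (hsemiconj g).iterate_right k z, ← (hsemiconj g).iterate_right l z, hS]
  refine Set.infinite_range_of_injective hinj ((finite_range_cos_nat_mul_rat_mul_pi r).subset ?_)
  exact Set.range_subset_iff.2 fun k => ⟨2 ^ k, by push_cast; rfl⟩

theorem two_mul_cos_rat_mul_pi_ne_int_add_int_mul_sqrt_five {a b : ℤ} (hab : 2 < |a - b * √5|)
    (r : ℚ) : 2 * cos (r * π) ≠ a + b * √5 := by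
  have h5 : √5 * √5 = ((5 : ℤ) : ℝ) := by push_cast; exact mul_self_sqrt (by norm_num)
  have hnonsq : ∀ n : ℤ, (5 : ℤ) ≠ n * n := fun n h =>
    (Int.prime_iff_natAbs_prime.2 (by norm_num) : Prime (5 : ℤ)).not_isSquare ⟨n, h⟩
  refine two_mul_cos_rat_mul_pi_ne_of_two_lt_abs (Zsqrtd.lift ⟨√5, h5⟩)
    (Zsqrtd.lift ⟨-√5, by rw [neg_mul_neg, h5]⟩) (Zsqrtd.lift_injective _ hnonsq) (z := ⟨a, b⟩) ?_ r
  simpa [sub_eq_add_neg] using hab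

theorem stmt_12 :
    ((Real.sqrt 5 - 1) / 2) ^ 4 - 3 * ((Real.sqrt 5 - 1) / 2) ^ 2 + 1 = 0 ∧
    (Real.sqrt 5 - 1) / 2 ∈ Set.Ioo (-1 : ℝ) 1 ∧
    ∀ r : ℚ, Real.cos ((r : ℝ) * Real.pi) ≠ (Real.sqrt 5 - 1) / 2 ∧
      Real.cos ((r : ℝ) * Real.pi) ≠ (1 - Real.sqrt 5) / 2 := by
  have h5 : √5 ^ 2 = 5 := sq_sqrt (by norm_num)
  have h2 : 2 < √5 := by rw [lt_sqrt] <;> norm_num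
  have h3 : √5 < 3 := by rw [sqrt_lt'] <;> norm_num
  refine ⟨?_, ⟨by linarith, by linarith⟩, fun r => ⟨fun h => ?_, fun h => ?_⟩⟩
  · linear_combination ((√5) ^ 2 / 16 - √5 / 4 - 1 / 16) * h5
  · refine two_mul_cos_rat_mul_pi_ne_int_add_int_mul_sqrt_five (a := -1) (b := 1) ?_ r ?_
    · push_cast; rw [abs_of_neg] <;> linarith
    · rw [h]; push_cast; ring
  · refine two_mul_cos_rat_mul_pi_ne_int_add_int_mul_sqrt_five (a := 1) (b := -1) ?_ r ?_
    · push_cast; rw [abs_of_pos] <;> linarith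
    · rw [h]; push_cast; ring
end

section
/- For real numbers s, t, the vector (-φs + t/φ - 1) is an eigenvalue of the 4×4 matrix A = [[-1,t,s,s],[t,-1,t,s],[s,t,-1,t],[s,s,t,-1]], where φ = (1+√5)/2. -/
/- Any root `x` of `x² = x + 1` has `x⁻¹ = x - 1`, and `(x, 1, -1, -x)` is then an eigenvector of
`A` for `-x s + t / x - 1`: each row reduces to the relation `x² = x + 1`. The golden ratio is
such a root. -/

theorem inv_eq_sub_one_of_sq_eq_add_one {K : Type*} [DivisionRing K] {x : K}
    (hx : x ^ 2 = x + 1) : x⁻¹ = x - 1 := by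
  refine inv_eq_of_mul_eq_one_right ?_
  rw [mul_sub, ← sq, hx, mul_one, add_sub_cancel_left]

theorem mulVec_eigenvector_of_sq_eq_add_one {K : Type*} [Field K] (s t x : K)
    (hx : x ^ 2 = x + 1) :
    (!![-1, t, s, s; t, -1, t, s; s, t, -1, t; s, s, t, -1] : Matrix (Fin 4) (Fin 4) K).mulVec
        ![x, 1, -1, -x] = (-x * s + t / x - 1) • ![x, 1, -1, -x] := by
  have hinv : t / x = t * (x - 1) := by
    rw [div_eq_mul_inv, inv_eq_sub_one_of_sq_eq_add_one hx]
  rw [hinv]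
  ext i
  fin_cases i <;>
    simp only [Matrix.mulVec, dotProduct, Fin.sum_univ_four, Fin.zero_eta, Fin.mk_one,
      Fin.reduceFinMk, Fin.isValue, Matrix.of_apply, Matrix.cons_val', Matrix.cons_val_fin_one,
      Matrix.cons_val_zero, Matrix.cons_val_one, Matrix.cons_val, Pi.smul_apply, smul_eq_mul]
  · linear_combination (s - t) * hx
  · ring
  · ring
  · linear_combination (t - s) * hx

theorem stmt_14 (s t : ℝ) (φ : ℝ) (hφ : φ = (1 + Real.sqrt 5) / 2) :
    ∃ v : Fin 4 → ℝ, v ≠ 0 ∧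
      (!![-1, t, s, s; t, -1, t, s; s, t, -1, t; s, s, t, -1] : Matrix (Fin 4) (Fin 4) ℝ).mulVec v
        = (-φ * s + t / φ - 1) • v := by
  subst hφ
  refine ⟨![Real.goldenRatio, 1, -1, -Real.goldenRatio], ?_,
    mulVec_eigenvector_of_sq_eq_add_one s t _ Real.goldenRatio_sq⟩
  intro h
  simpa using congrFun h 1
end
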